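/- arXiv:2305.04357 — 3 statements merged into one kernel-verified Lean document; each statement's English description precedes it below -/
import Mathlib

section
/- Shortness of the sup-JSD distance under stochastic post-composition: for column-stochastic matrices P, Q both indexed by Y×X and any column-stochastic matrix F indexed by Z×Y (all index types finite and nonempty), D(F·P, F·Q) ≤ D(P,Q), where · denotes matrix multiplication. -/
open Finset Matrix

noncomputable section

/-- A probability vector on a finite type: nonnegative entries summing to 1. -/
def IsProbVec {X : Type*} [Fintype X] (p : X → ℝ) : Prop :=
  (∀ x, 0 ≤ p x) ∧ ∑ x, p x = 1

/-- Kullback–Leibler divergence, with the convention that terms with `p x = 0`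
contribute `0`. -/
noncomputable def KL {X : Type*} [Fintype X] (p q : X → ℝ) : ℝ :=
  ∑ x, if p x = 0 then 0 else p x * Real.log (p x / q x)

/-- Jensen–Shannon distance. -/
noncomputable def JSD {X : Type*} [Fintype X] (p q : X → ℝ) : ℝ :=
  Real.sqrt ((1 / 2) * KL p (fun x => (p x + q x) / 2)
    + (1 / 2) * KL q (fun x => (p x + q x) / 2))

/-- A column-stochastic matrix: nonnegative entries, every column sums to 1. -/
def IsColStoch {Y X : Type*} [Fintype Y] [Fintype X] (M : Matrix Y X ℝ) : Prop :=
  (∀ y x, 0 ≤ M y x) ∧ ∀ x, ∑ y, M y x = 1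

/-- The sup-JSD distance between two matrices of the same shape:
the maximum over columns of the JSD between corresponding columns. -/
noncomputable def supJSD {Y X : Type*} [Fintype Y] [Fintype X] [Nonempty X]
    (M N : Matrix Y X ℝ) : ℝ :=
  Finset.univ.sup' Finset.univ_nonempty fun x => JSD (fun y => M y x) (fun y => N y x)

/-- An abstraction matrix: entries in {0,1}, every column contains exactly one 1,
and every row contains at least one 1. -/
def IsAbsMatrix {N M : Type*} [Fintype N] [Fintype M] (α : Matrix N M ℝ) : Prop :=
  (∀ j i, α j i = 0 ∨ α j i = 1) ∧ (∀ i, ∃! j, α j i = 1) ∧ (∀ j, ∃ i, α j i = 1)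

/-- The pseudo-inverse `α⁺ = αᵀ·(α·αᵀ)⁻¹` of an abstraction matrix. -/
noncomputable def pinv {N M : Type*} [Fintype N] [Fintype M] [DecidableEq N]
    (α : Matrix N M ℝ) : Matrix M N ℝ :=
  αᵀ * (α * αᵀ)⁻¹

/-!
Post-composition with `F` acts on each column as the Markov kernel `p ↦ F *ᵥ p`. By the log-sum
inequality KL divergence contracts under any Markov kernel (data processing), and `F *ᵥ` maps the
midpoint of `p` and `q` to the midpoint of `F *ᵥ p` and `F *ᵥ q`; hence JSD contracts column by
column, and so does its maximum over the columns.
-/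

-- The `p x = 0` convention in `KL` is automatic here, since `0 * _ = 0`.
theorem KL_eq_sum {X : Type*} [Fintype X] (p q : X → ℝ) :
    KL p q = ∑ x, p x * Real.log (p x / q x) :=
  sum_congr rfl fun x _ => by split_ifs with h <;> simp [h]

theorem mul_log_add_sub_le_mul_log_div {a b c : ℝ} (ha : 0 ≤ a) (hb : 0 ≤ b)
    (hab : a ≠ 0 → 0 < b) (hc : 0 < c) :
    a * Real.log c + a - b * c ≤ a * Real.log (a / b) := by
  rcases ha.eq_or_lt with rfl | ha
  · simpa using mul_nonneg hb hc.le
  have hb' := hab ha.ne'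
  have gibbs := Real.log_le_sub_one_of_pos (x := b * c / a) (by positivity)
  rw [Real.log_div (by positivity) ha.ne', Real.log_mul hb'.ne' hc.ne'] at gibbs
  rw [Real.log_div ha.ne' hb'.ne']
  have hbc : a * (b * c / a) = b * c := by field_simp
  nlinarith

theorem sum_mul_log_div_sum_le {ι : Type*} (s : Finset ι) (a b : ι → ℝ)
    (ha : ∀ i ∈ s, 0 ≤ a i) (hb : ∀ i ∈ s, 0 ≤ b i) (hab : ∀ i ∈ s, a i ≠ 0 → 0 < b i) :
    (∑ i ∈ s, a i) * Real.log ((∑ i ∈ s, a i) / ∑ i ∈ s, b i)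
      ≤ ∑ i ∈ s, a i * Real.log (a i / b i) := by
  set A := ∑ i ∈ s, a i
  set B := ∑ i ∈ s, b i
  rcases (sum_nonneg ha : 0 ≤ A).eq_or_lt with hA | hA
  · have ha0 := (sum_eq_zero_iff_of_nonneg ha).1 hA.symm
    rw [show A = 0 from hA.symm, zero_mul, sum_eq_zero fun i hi => by rw [ha0 i hi, zero_mul]]
  obtain ⟨i, hi, hai⟩ := exists_ne_zero_of_sum_ne_zero hA.ne'
  have hB : 0 < B := (hab i hi hai).trans_le (single_le_sum hb hi)
  calc A * Real.log (A / B)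
      = ∑ i ∈ s, (a i * Real.log (A / B) + a i - b i * (A / B)) := by
        rw [sum_sub_distrib, sum_add_distrib, ← sum_mul, ← sum_mul]
        field_simp
        ring
    _ ≤ ∑ i ∈ s, a i * Real.log (a i / b i) :=
        sum_le_sum fun i hi =>
          mul_log_add_sub_le_mul_log_div (ha i hi) (hb i hi) (hab i hi) (by positivity)

section DataProcessing

variable {Y Z : Type*} [Fintype Y] [Fintype Z] {F : Matrix Z Y ℝ}

theorem KL_mulVec_le (hF : IsColStoch F) {p m : Y → ℝ} (hp : ∀ y, 0 ≤ p y)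
    (hm : ∀ y, 0 ≤ m y) (hpm : ∀ y, p y ≠ 0 → 0 < m y) :
    KL (F *ᵥ p) (F *ᵥ m) ≤ KL p m := by
  simp only [KL_eq_sum]
  calc ∑ z, (F *ᵥ p) z * Real.log ((F *ᵥ p) z / (F *ᵥ m) z)
      ≤ ∑ z, ∑ y, F z y * p y * Real.log (F z y * p y / (F z y * m y)) :=
        sum_le_sum fun z _ =>
          sum_mul_log_div_sum_le _ (fun y => F z y * p y) (fun y => F z y * m y)
            (fun y _ => mul_nonneg (hF.1 z y) (hp y)) (fun y _ => mul_nonneg (hF.1 z y) (hm y))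
            fun y _ hFp => mul_pos ((hF.1 z y).lt_of_ne' (left_ne_zero_of_mul hFp))
              (hpm y (right_ne_zero_of_mul hFp))
    _ = ∑ z, ∑ y, F z y * (p y * Real.log (p y / m y)) := by
        refine sum_congr rfl fun z _ => sum_congr rfl fun y _ => ?_
        rcases eq_or_ne (F z y) 0 with hFzy | hFzy
        · simp [hFzy]
        · rw [mul_div_mul_left _ _ hFzy, mul_assoc]
    _ = ∑ y, p y * Real.log (p y / m y) := by
        simp only [sum_comm (γ := Z), ← sum_mul, hF.2, one_mul]

theorem JSD_mulVec_le (hF : IsColStoch F) {p q : Y → ℝ} (hp : ∀ y, 0 ≤ p y)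
    (hq : ∀ y, 0 ≤ q y) :
    JSD (F *ᵥ p) (F *ᵥ q) ≤ JSD p q := by
  set m : Y → ℝ := fun y => (p y + q y) / 2
  have hmid : (fun z => ((F *ᵥ p) z + (F *ᵥ q) z) / 2) = F *ᵥ m := by
    funext z
    simp only [mulVec, dotProduct, m, ← sum_add_distrib, sum_div, mul_add, add_div, mul_div]
  have hm y : 0 ≤ m y := by simp only [m]; linarith [hp y, hq y]
  have hpm y (hpy : p y ≠ 0) : 0 < m y := by simp only [m]; linarith [(hp y).lt_of_ne' hpy, hq y]
  have hqm y (hqy : q y ≠ 0) : 0 < m y := by simp only [m]; linarith [(hq y).lt_of_ne' hqy, hp y]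
  unfold JSD
  rw [hmid]
  exact Real.sqrt_le_sqrt (by linarith [KL_mulVec_le hF hp hm hpm, KL_mulVec_le hF hq hm hqm])

end DataProcessing

theorem supJSD_shortness_post_general {X Y Z : Type*}
    [Fintype X] [Nonempty X] [Fintype Y] [Fintype Z]
    (P Q : Matrix Y X ℝ) (F : Matrix Z Y ℝ)
    (hP : IsColStoch P) (hQ : IsColStoch Q) (hF : IsColStoch F) :
    supJSD (F * P) (F * Q) ≤ supJSD P Q :=
  sup'_mono_fun fun x _ => JSD_mulVec_le hF (fun y => hP.1 y x) (fun y => hQ.1 y x)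

theorem supJSD_shortness_post {X Y Z : Type*}
    [Fintype X] [Nonempty X] [Fintype Y] [Nonempty Y] [Fintype Z] [Nonempty Z]
    (P Q : Matrix Y X ℝ) (F : Matrix Z Y ℝ)
    (hP : IsColStoch P) (hQ : IsColStoch Q) (hF : IsColStoch F) :
    supJSD (F * P) (F * Q) ≤ supJSD P Q :=
  supJSD_shortness_post_general P Q F hP hQ hF
end
end

section
/- Triangle inequality for the interventional information loss (IIL) error under composition of abstractions: D(μ, α_Y⁺·β_Y⁺·μ''·β_X·α_X) ≤ D(μ, α_Y⁺·μ'·α_X) + D(μ', β_Y⁺·μ''·β_X), where γ⁺ = γᵀ·(γ·γᵀ)⁻¹ denotes the pseudo-inverse of an abstraction matrix γ. -/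
open Finset Matrix

noncomputable section

/-!
Column `x` of `pinv αY * W * αX` is column `αX x` of `W` with each entry spread uniformly over
its fibre under `αY`. The pointwise Jensen–Shannon term is positively homogeneous, so this
spreading does not change the Jensen–Shannon distance, and the estimate follows from the
triangle inequality for the Jensen–Shannon distance between nonnegative vectors.

By Minkowski's inequality that triangle inequality reduces to the scalar one for
`√(jsTerm a b)`, proved as by Endres and Schindelin. If `b` lies outside the interval between
`a` and `c`, it follows from monotonicity of `jsTerm` in one argument. Otherwise
`t ↦ √(jsTerm t b) - √(jsTerm t a)` increases on `[b, c]`, because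
`p ↦ log (t / m)² / jsTerm t p` (with `m = (t + p) / 2`) increases on `[0, t)`. After scaling,
this reduces to `u log u + (2 - u) log (2 - u) ≤ -log u · log (2 - u)` on `(0, 1]`.
-/

open Real InformationTheory

def jsTerm (a b : ℝ) : ℝ :=
  (a * log (a / ((a + b) / 2)) + b * log (b / ((a + b) / 2))) / 2

lemma jsTerm_comm (a b : ℝ) : jsTerm a b = jsTerm b a := by
  unfold jsTerm; rw [add_comm a b]; ring

lemma jsTerm_self (a : ℝ) : jsTerm a a = 0 := by
  rcases eq_or_ne a 0 with rfl | ha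
  · simp [jsTerm]
  · simp [jsTerm, show (a + a) / 2 = a by ring, ha]

lemma jsTerm_zero_right (a : ℝ) : jsTerm a 0 = a * log 2 / 2 := by
  rcases eq_or_ne a 0 with rfl | ha
  · simp [jsTerm]
  · simp [jsTerm, div_div_eq_mul_div, ha]

lemma jsTerm_mul {t : ℝ} (ht : 0 < t) (a b : ℝ) : jsTerm (t * a) (t * b) = t * jsTerm a b := by
  unfold jsTerm
  rw [show (t * a + t * b) / 2 = t * ((a + b) / 2) by ring,
    mul_div_mul_left a _ ht.ne', mul_div_mul_left b _ ht.ne']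
  ring

lemma jsTerm_eq_klFun {a b : ℝ} (hab : 0 < a + b) :
    jsTerm a b = (a + b) / 4 * (klFun (a / ((a + b) / 2)) + klFun (b / ((a + b) / 2))) := by
  unfold jsTerm klFun
  field_simp
  ring

lemma jsTerm_nonneg {a b : ℝ} (ha : 0 ≤ a) (hb : 0 ≤ b) : 0 ≤ jsTerm a b := by
  rcases (add_nonneg ha hb).eq_or_lt with hab | hab
  · obtain ⟨rfl, rfl⟩ := (add_eq_zero_iff_of_nonneg ha hb).1 hab.symm
    exact (jsTerm_self 0).ge
  · rw [jsTerm_eq_klFun hab]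
    exact mul_nonneg (by positivity) (add_nonneg (klFun_nonneg (by positivity))
      (klFun_nonneg (by positivity)))

lemma jsTerm_pos {a b : ℝ} (ha : 0 ≤ a) (hb : 0 ≤ b) (hab : a ≠ b) : 0 < jsTerm a b := by
  have hsum : 0 < a + b := by
    rcases ha.eq_or_lt with rfl | ha
    · simpa using hb.lt_of_ne hab
    · positivity
  have hm : 0 < (a + b) / 2 := by positivity
  have hka : klFun (a / ((a + b) / 2)) ≠ 0 := by
    rw [Ne, klFun_eq_zero_iff (by positivity), div_eq_one_iff_eq hm.ne']
    intro h; apply hab; linarith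
  rw [jsTerm_eq_klFun hsum]
  exact mul_pos (by positivity) (add_pos_of_pos_of_nonneg
    ((klFun_nonneg (by positivity)).lt_of_ne' hka) (klFun_nonneg (by positivity)))

lemma jsTerm_eq_of_add_pos {x q : ℝ} (hxq : 0 < x + q) :
    jsTerm x q = (x * log x - x * log ((x + q) / 2)
      + (q * log q - q * log ((x + q) / 2))) / 2 := by
  have hm : (x + q) / 2 ≠ 0 := by positivity
  have key : ∀ a, a * log (a / ((x + q) / 2)) = a * log a - a * log ((x + q) / 2) := by
    intro a
    rcases eq_or_ne a 0 with rfl | ha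
    · simp
    · rw [log_div ha hm]; ring
  rw [jsTerm, key, key]

lemma continuousOn_jsTerm_left {q : ℝ} (hq : 0 ≤ q) :
    ContinuousOn (fun x => jsTerm x q) (Set.Ici 0) := by
  rcases hq.eq_or_lt with rfl | hq
  · simp only [jsTerm_zero_right]
    fun_prop
  have hpos : ∀ x ∈ Set.Ici (0 : ℝ), 0 < x + q := fun x hx => by
    have : (0 : ℝ) ≤ x := hx; linarith
  refine ContinuousOn.congr ?_ fun x hx => jsTerm_eq_of_add_pos (hpos x hx)
  have hlog : ContinuousOn (fun x : ℝ => log ((x + q) / 2)) (Set.Ici 0) :=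
    ContinuousOn.log (by fun_prop) fun x hx => by have := hpos x hx; positivity
  exact ((continuous_mul_log.continuousOn.sub (continuousOn_id.mul hlog)).add
    (continuousOn_const.sub (continuousOn_const.mul hlog))).div_const 2

lemma hasDerivAt_jsTerm_left {q x : ℝ} (hx : 0 < x) (hq : 0 ≤ q) :
    HasDerivAt (fun y => jsTerm y q) (log (x / ((x + q) / 2)) / 2) x := by
  have hm : 0 < (x + q) / 2 := by positivity
  have hlog : HasDerivAt (fun y : ℝ => log ((y + q) / 2)) ((1 / 2) / ((x + q) / 2)) x :=
    (((hasDerivAt_id x).add_const q).div_const 2).log hm.ne' |>.congr_deriv (by simp)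
  have hexp := (((hasDerivAt_mul_log hx.ne').sub ((hasDerivAt_id x).mul hlog)).add
    ((hasDerivAt_const x (q * log q)).sub (hlog.const_mul q))).div_const 2
  refine (hexp.congr_of_eventuallyEq ?_).congr_deriv ?_
  · filter_upwards [eventually_gt_nhds (show -q < x by linarith)] with y hy
    exact jsTerm_eq_of_add_pos (by linarith)
  · rw [log_div hx.ne' hm.ne', id]
    field_simp
    ring

lemma antitoneOn_jsTerm_left {c : ℝ} (hc : 0 ≤ c) :
    AntitoneOn (fun x => jsTerm x c) (Set.Icc 0 c) := by
  refine antitoneOn_of_hasDerivWithinAt_nonpos (f' := fun x => log (x / ((x + c) / 2)) / 2)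
    (convex_Icc 0 c)
    ((continuousOn_jsTerm_left hc).mono Set.Icc_subset_Ici_self)
    (fun x hx => ?_) (fun x hx => ?_)
  · rw [interior_Icc] at hx
    exact (hasDerivAt_jsTerm_left hx.1 hc).hasDerivWithinAt
  · rw [interior_Icc] at hx
    have hm : 0 < (x + c) / 2 := by linarith [hx.1]
    have := log_nonpos (div_nonneg hx.1.le hm.le) ((div_le_one hm).2 (by linarith [hx.2]))
    linarith

lemma monotoneOn_jsTerm_left {a : ℝ} (ha : 0 ≤ a) :
    MonotoneOn (fun x => jsTerm x a) (Set.Ici a) := by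
  refine monotoneOn_of_hasDerivWithinAt_nonneg (f' := fun x => log (x / ((x + a) / 2)) / 2)
    (convex_Ici a)
    ((continuousOn_jsTerm_left ha).mono (Set.Ici_subset_Ici.2 ha))
    (fun x hx => ?_) (fun x hx => ?_)
  · rw [interior_Ici] at hx
    exact (hasDerivAt_jsTerm_left (ha.trans_lt hx) ha).hasDerivWithinAt
  · rw [interior_Ici] at hx
    have hx : a < x := hx
    have hm : 0 < (x + a) / 2 := by linarith
    have := log_nonneg ((one_le_div hm).2 (show (x + a) / 2 ≤ x by linarith))
    linarith

lemma jsTerm_two_sub (u : ℝ) : jsTerm (2 - u) u = (u * log u + (2 - u) * log (2 - u)) / 2 := by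
  rw [jsTerm, show (2 - u + u) / 2 = 1 by ring, div_one, div_one, add_comm]

lemma mul_log_add_mul_log_le {u : ℝ} (hu : 0 < u) (hu1 : u ≤ 1) :
    u * log u + (2 - u) * log (2 - u) ≤ -(log u * log (2 - u)) := by
  set H : ℝ → ℝ := fun v => -(log v * log (2 - v)) - (v * log v + (2 - v) * log (2 - v))
  have hH : ∀ v, 0 < v → v < 2 → HasDerivAt H
      ((v - 1) / (v * (2 - v)) * (v * log v + (2 - v) * log (2 - v))) v := by
    intro v hv hv2
    have hsub : HasDerivAt (fun y : ℝ => 2 - y) (-1) v := by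
      simpa using (hasDerivAt_id v).const_sub 2
    have hlog := hsub.log (by linarith)
    refine (((hasDerivAt_log hv.ne').mul hlog).neg.sub
      ((hasDerivAt_mul_log hv.ne').add (hsub.mul hlog))).congr_deriv ?_
    have : (2 : ℝ) - v ≠ 0 := by linarith
    field_simp
    ring
  have hanti : AntitoneOn H (Set.Icc u 1) := by
    refine antitoneOn_of_hasDerivWithinAt_nonpos
      (f' := fun v => (v - 1) / (v * (2 - v)) * (v * log v + (2 - v) * log (2 - v)))
      (convex_Icc u 1)
      (fun v hv => (hH v (hu.trans_le hv.1) (by linarith [hv.2])).continuousAt.continuousWithinAt)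
      (fun v hv => ?_) (fun v hv => ?_)
    all_goals rw [interior_Icc] at hv
    · exact (hH v (hu.trans hv.1) (by linarith [hv.2])).hasDerivWithinAt
    · have hv0 : 0 < v := hu.trans hv.1
      have hK : 0 ≤ v * log v + (2 - v) * log (2 - v) := by
        linarith [jsTerm_two_sub v, jsTerm_nonneg (by linarith [hv.2] : (0:ℝ) ≤ 2 - v) hv0.le]
      have : (v - 1) / (v * (2 - v)) ≤ 0 :=
        div_nonpos_of_nonpos_of_nonneg (by linarith [hv.2]) (mul_nonneg hv0.le (by linarith [hv.2]))
      exact mul_nonpos_of_nonpos_of_nonneg this hK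
  have := hanti ⟨le_rfl, hu1⟩ ⟨hu1, le_rfl⟩ hu1
  norm_num [H] at this
  linarith

lemma four_mul_jsTerm_le {t p : ℝ} (hp : 0 < p) (hpt : p < t) :
    4 * jsTerm t p ≤ (t + p) * (log (t / ((t + p) / 2)) * log ((t + p) / 2 / p)) := by
  set m := (t + p) / 2 with hm_def
  have hm : 0 < m := by rw [hm_def]; linarith
  set u := p / m
  have hu : 0 < u := by positivity
  have hu1 : u ≤ 1 := (div_le_one hm).2 (by linarith)
  have hp_eq : p = m * u := (mul_div_cancel₀ p hm.ne').symm
  have ht_eq : t = m * (2 - u) := by rw [mul_sub, ← hp_eq]; linarith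
  have h1 : t / m = 2 - u := by rw [ht_eq]; field_simp
  have h2 : m / p = u⁻¹ := by rw [hp_eq]; field_simp
  rw [h1, h2, log_inv, show t + p = 2 * m by linarith, ht_eq, hp_eq, jsTerm_mul hm,
    jsTerm_two_sub]
  nlinarith [mul_log_add_mul_log_le hu hu1]

lemma monotoneOn_log_sq_div_jsTerm {t : ℝ} (ht : 0 < t) :
    MonotoneOn (fun p => log (t / ((t + p) / 2)) ^ 2 / jsTerm t p) (Set.Ico 0 t) := by
  have hJ : ∀ p ∈ Set.Ico 0 t, jsTerm t p ≠ 0 := fun p hp =>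
    (jsTerm_pos ht.le hp.1 hp.2.ne').ne'
  have hL : ∀ p, 0 ≤ p → HasDerivAt (fun y => log (t / ((t + y) / 2))) (-(t + p)⁻¹) p := by
    intro p hp
    have hm : (t + p) / 2 ≠ 0 := by positivity
    refine ((hasDerivAt_const p t).div (((hasDerivAt_id p).const_add t).div_const 2) hm).log
      (div_ne_zero ht.ne' hm) |>.congr_deriv ?_
    simp only [id, Pi.div_apply]
    field_simp
    ring
  have hderiv : ∀ p ∈ Set.Ioo 0 t, HasDerivAt (fun p => log (t / ((t + p) / 2)) ^ 2 / jsTerm t p)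
      ((2 * log (t / ((t + p) / 2)) * -(t + p)⁻¹ * jsTerm t p
        - log (t / ((t + p) / 2)) ^ 2 * (log (p / ((p + t) / 2)) / 2)) / jsTerm t p ^ 2) p := by
    intro p hp
    have hJ' : HasDerivAt (fun y => jsTerm t y) (log (p / ((p + t) / 2)) / 2) p := by
      simpa only [jsTerm_comm t] using hasDerivAt_jsTerm_left hp.1 ht.le
    refine (((hL p hp.1.le).pow 2).div hJ' (hJ p (Set.Ioo_subset_Ico_self hp))).congr_deriv ?_
    norm_num
  refine monotoneOn_of_deriv_nonneg (convex_Ico 0 t) (fun p hp => ?_)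
    (fun p hp => ?_) (fun p hp => ?_)
  · have hcont : ContinuousWithinAt (fun y => jsTerm t y) (Set.Ico 0 t) p := by
      simpa only [jsTerm_comm t] using
        (continuousOn_jsTerm_left ht.le).mono Set.Ico_subset_Ici_self p hp
    exact ((hL p hp.1).continuousAt.continuousWithinAt.pow 2).div hcont (hJ p hp)
  · rw [interior_Ico] at hp
    exact (hderiv p hp).differentiableAt.differentiableWithinAt
  · rw [interior_Ico] at hp
    rw [(hderiv p hp).deriv]
    obtain ⟨hp0, hpt⟩ := hp
    set L := log (t / ((t + p) / 2))
    set B := log ((t + p) / 2 / p)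
    have hLnn : 0 ≤ L := log_nonneg ((one_le_div (by positivity)).2 (by linarith))
    have hB : log (p / ((p + t) / 2)) = -B := by
      rw [← log_inv, inv_div, add_comm p t]
    have hsum : 0 < t + p := by positivity
    have hnum : 2 * L * -(t + p)⁻¹ * jsTerm t p - L ^ 2 * (-B / 2)
        = L * ((t + p) * (L * B) - 4 * jsTerm t p) / (2 * (t + p)) := by
      field_simp
      ring
    rw [hB, hnum]
    have := four_mul_jsTerm_le hp0 hpt
    positivity

lemma sqrt_jsTerm_le_of_lt_of_lt {a b c : ℝ} (ha : 0 ≤ a) (hab : a < b) (hbc : b < c) :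
    √(jsTerm a c) ≤ √(jsTerm a b) + √(jsTerm b c) := by
  have hb : 0 < b := ha.trans_lt hab
  have hderiv : ∀ t ∈ Set.Ioo b c, HasDerivAt (fun t => √(jsTerm t b) - √(jsTerm t a))
      (log (t / ((t + b) / 2)) / 2 / (2 * √(jsTerm t b))
        - log (t / ((t + a) / 2)) / 2 / (2 * √(jsTerm t a))) t := fun t ht =>
    ((hasDerivAt_jsTerm_left (hb.trans ht.1) hb.le).sqrt
      (jsTerm_pos (hb.trans ht.1).le hb.le ht.1.ne').ne').sub
    ((hasDerivAt_jsTerm_left (hb.trans ht.1) ha).sqrt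
      (jsTerm_pos (hb.trans ht.1).le ha (hab.trans ht.1).ne').ne')
  have hmono : MonotoneOn (fun t => √(jsTerm t b) - √(jsTerm t a)) (Set.Icc b c) := by
    refine monotoneOn_of_deriv_nonneg (convex_Icc b c) ?_ (fun t ht => ?_) (fun t ht => ?_)
    · have hsub : Set.Icc b c ⊆ Set.Ici 0 := fun t ht => hb.le.trans ht.1
      exact ((continuousOn_jsTerm_left hb.le).mono hsub).sqrt.sub
        ((continuousOn_jsTerm_left ha).mono hsub).sqrt
    · rw [interior_Icc] at ht
      exact (hderiv t ht).differentiableAt.differentiableWithinAt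
    rw [interior_Icc] at ht
    rw [(hderiv t ht).deriv]
    have ht0 : 0 < t := hb.trans ht.1
    have hratio : ∀ p ∈ Set.Ico 0 t,
        log (t / ((t + p) / 2)) / √(jsTerm t p) = √(log (t / ((t + p) / 2)) ^ 2 / jsTerm t p) :=
      fun p hp => by
        rw [sqrt_div (sq_nonneg _), sqrt_sq (log_nonneg ((one_le_div (by linarith [hp.1])).2
          (by linarith [hp.2])))]
    have hle := sqrt_le_sqrt (monotoneOn_log_sq_div_jsTerm ht0 ⟨ha, hab.trans ht.1⟩
      ⟨hb.le, ht.1⟩ hab.le)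
    rw [← hratio a ⟨ha, hab.trans ht.1⟩, ← hratio b ⟨hb.le, ht.1⟩] at hle
    have e : ∀ p, log (t / ((t + p) / 2)) / 2 / (2 * √(jsTerm t p))
        = log (t / ((t + p) / 2)) / √(jsTerm t p) / 4 := fun p => by ring
    rw [e, e]
    linarith
  have := hmono ⟨le_rfl, hbc.le⟩ ⟨hbc.le, le_rfl⟩ hbc.le
  simp only [jsTerm_self, sqrt_zero, zero_sub] at this
  rw [jsTerm_comm c b, jsTerm_comm c a, jsTerm_comm b a] at this
  linarith

lemma sqrt_jsTerm_triangle {a b c : ℝ} (ha : 0 ≤ a) (hb : 0 ≤ b) (hc : 0 ≤ c) :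
    √(jsTerm a c) ≤ √(jsTerm a b) + √(jsTerm b c) := by
  wlog hac : a ≤ c generalizing a c
  · have := this hc ha (le_of_not_ge hac)
    rw [jsTerm_comm c a, jsTerm_comm c b, jsTerm_comm b a] at this
    linarith
  rcases le_or_gt b a with hba | hab
  · calc √(jsTerm a c) ≤ √(jsTerm b c) :=
          sqrt_le_sqrt (antitoneOn_jsTerm_left hc ⟨hb, hba.trans hac⟩ ⟨ha, hac⟩ hba)
      _ ≤ √(jsTerm a b) + √(jsTerm b c) := le_add_of_nonneg_left (sqrt_nonneg _)
  rcases le_or_gt c b with hcb | hbc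
  · have hle : jsTerm c a ≤ jsTerm b a := monotoneOn_jsTerm_left ha hac (hac.trans hcb) hcb
    rw [jsTerm_comm c a, jsTerm_comm b a] at hle
    calc √(jsTerm a c) ≤ √(jsTerm a b) := sqrt_le_sqrt hle
      _ ≤ √(jsTerm a b) + √(jsTerm b c) := le_add_of_nonneg_right (sqrt_nonneg _)
  exact sqrt_jsTerm_le_of_lt_of_lt ha hab hbc

lemma jsd_eq_sqrt_sum_jsTerm {ι : Type*} [Fintype ι] (p q : ι → ℝ) :
    JSD p q = √(∑ i, jsTerm (p i) (q i)) := by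
  unfold JSD KL
  rw [Finset.mul_sum, Finset.mul_sum, ← Finset.sum_add_distrib]
  congr 1
  refine Finset.sum_congr rfl fun i _ => ?_
  rcases eq_or_ne (p i) 0 with h | h <;> rcases eq_or_ne (q i) 0 with h' | h' <;>
    simp [jsTerm, h, h'] <;> ring

lemma sqrt_sum_le_sqrt_sum_add_sqrt_sum {ι : Type*} (s : Finset ι) {f g h : ι → ℝ}
    (hg : ∀ i, 0 ≤ g i) (hh : ∀ i, 0 ≤ h i) (hf : ∀ i, √(f i) ≤ √(g i) + √(h i)) :
    √(∑ i ∈ s, f i) ≤ √(∑ i ∈ s, g i) + √(∑ i ∈ s, h i) := by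
  have hG := Finset.sum_nonneg fun i (_ : i ∈ s) => hg i
  have hH := Finset.sum_nonneg fun i (_ : i ∈ s) => hh i
  rw [sqrt_le_left (by positivity)]
  calc ∑ i ∈ s, f i ≤ ∑ i ∈ s, (g i + h i + 2 * (√(g i) * √(h i))) := by
        refine Finset.sum_le_sum fun i _ => ?_
        have := (sqrt_le_left (by positivity)).1 (hf i)
        nlinarith [sq_sqrt (hg i), sq_sqrt (hh i)]
    _ ≤ ∑ i ∈ s, g i + ∑ i ∈ s, h i + 2 * (√(∑ i ∈ s, g i) * √(∑ i ∈ s, h i)) := by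
        rw [Finset.sum_add_distrib, Finset.sum_add_distrib, ← Finset.mul_sum]
        gcongr
        exact sum_sqrt_mul_sqrt_le s hg hh
    _ = (√(∑ i ∈ s, g i) + √(∑ i ∈ s, h i)) ^ 2 := by
        rw [add_sq, sq_sqrt hG, sq_sqrt hH]
        ring

lemma jsd_triangle {ι : Type*} [Fintype ι] {u v w : ι → ℝ} (hu : ∀ i, 0 ≤ u i)
    (hv : ∀ i, 0 ≤ v i) (hw : ∀ i, 0 ≤ w i) : JSD u w ≤ JSD u v + JSD v w := by
  simp only [jsd_eq_sqrt_sum_jsTerm]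
  exact sqrt_sum_le_sqrt_sum_add_sqrt_sum _ (fun i => jsTerm_nonneg (hu i) (hv i))
    (fun i => jsTerm_nonneg (hv i) (hw i)) fun i => sqrt_jsTerm_triangle (hu i) (hv i) (hw i)

lemma supJSD_triangle {Y X : Type*} [Fintype Y] [Fintype X] [Nonempty X] {M N P : Matrix Y X ℝ}
    (hM : ∀ y x, 0 ≤ M y x) (hN : ∀ y x, 0 ≤ N y x) (hP : ∀ y x, 0 ≤ P y x) :
    supJSD M P ≤ supJSD M N + supJSD N P :=
  Finset.sup'_le _ _ fun x hx => (jsd_triangle (hM · x) (hN · x) (hP · x)).trans <|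
    add_le_add (Finset.le_sup' (fun x => JSD (fun y => M y x) (fun y => N y x)) hx)
      (Finset.le_sup' (fun x => JSD (fun y => N y x) (fun y => P y x)) hx)

namespace IsAbsMatrix

variable {N M : Type*} [Fintype N] [Fintype M] {α : Matrix N M ℝ}

def toFun (hα : IsAbsMatrix α) : M → N := fun j => (hα.2.1 j).choose

lemma apply_toFun (hα : IsAbsMatrix α) (j : M) : α (hα.toFun j) j = 1 :=
  (hα.2.1 j).choose_spec.1

lemma apply_of_ne_toFun (hα : IsAbsMatrix α) {i : N} {j : M} (h : i ≠ hα.toFun j) :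
    α i j = 0 :=
  (hα.1 i j).resolve_right fun h1 => h ((hα.2.1 j).choose_spec.2 i h1)

lemma sum_mul_apply (hα : IsAbsMatrix α) (g : N → ℝ) (j : M) :
    ∑ i, g i * α i j = g (hα.toFun j) := by
  rw [Finset.sum_eq_single (hα.toFun j)
    (fun i _ hi => by rw [hα.apply_of_ne_toFun hi, mul_zero]) (by simp), hα.apply_toFun, mul_one]

lemma nonneg (hα : IsAbsMatrix α) (i : N) (j : M) : 0 ≤ α i j := by
  rcases hα.1 i j with h | h <;> simp [h]

lemma rowSum_pos (hα : IsAbsMatrix α) (i : N) : 0 < ∑ j, α i j := by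
  obtain ⟨j, hj⟩ := hα.2.2 i
  exact hj ▸ zero_lt_one |>.trans_le
    (Finset.single_le_sum (fun k _ => hα.nonneg i k) (Finset.mem_univ j))

lemma mul_transpose [DecidableEq N] (hα : IsAbsMatrix α) :
    α * αᵀ = diagonal fun i => ∑ j, α i j := by
  ext i k
  rw [mul_apply, diagonal_apply]
  split_ifs with hik
  · subst hik
    exact Finset.sum_congr rfl fun j _ => by rcases hα.1 i j with h | h <;> simp [h]
  · refine Finset.sum_eq_zero fun j _ => ?_
    by_cases hi : i = hα.toFun j
    · rw [transpose_apply, hα.apply_of_ne_toFun fun hk => hik (hi.trans hk.symm), mul_zero]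
    · rw [hα.apply_of_ne_toFun hi, zero_mul]

lemma pinv_apply [DecidableEq N] (hα : IsAbsMatrix α) (j : M) (i : N) :
    pinv α j i = α i j / ∑ k, α i k := by
  have hinv : (diagonal fun i => ∑ k, α i k)⁻¹ = diagonal fun i => (∑ k, α i k)⁻¹ := by
    refine inv_eq_right_inv ?_
    rw [diagonal_mul_diagonal, ← diagonal_one]
    exact congrArg diagonal (funext fun i => mul_inv_cancel₀ (hα.rowSum_pos i).ne')
  rw [pinv, hα.mul_transpose, hinv, mul_diagonal, transpose_apply, div_eq_mul_inv]

lemma mul_right_apply {P : Type*} (hα : IsAbsMatrix α) (B : Matrix P N ℝ) (p : P) (j : M) :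
    (B * α) p j = B p (hα.toFun j) := by
  rw [mul_apply, hα.sum_mul_apply]

lemma pinv_mul_apply {P : Type*} [DecidableEq N] (hα : IsAbsMatrix α) (A : Matrix N P ℝ)
    (j : M) (p : P) : (pinv α * A) j p = A (hα.toFun j) p / ∑ k, α (hα.toFun j) k := by
  rw [mul_apply, ← hα.sum_mul_apply fun i => A i p / ∑ k, α i k]
  exact Finset.sum_congr rfl fun i _ => by rw [hα.pinv_apply]; ring

lemma pinv_mul_mul_apply {P Q : Type*} [Fintype P] [Fintype Q] [DecidableEq N]
    {γ : Matrix P Q ℝ} (hα : IsAbsMatrix α) (hγ : IsAbsMatrix γ) (A : Matrix N P ℝ) (j : M)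
    (q : Q) : (pinv α * A * γ) j q = A (hα.toFun j) (hγ.toFun q) / ∑ k, α (hα.toFun j) k := by
  rw [hγ.mul_right_apply, hα.pinv_mul_apply]

lemma pinv_mul_mul_nonneg {P Q : Type*} [Fintype P] [Fintype Q] [DecidableEq N] {γ : Matrix P Q ℝ}
    (hα : IsAbsMatrix α) (hγ : IsAbsMatrix γ) {A : Matrix N P ℝ} (hA : ∀ i p, 0 ≤ A i p)
    (j : M) (q : Q) : 0 ≤ (pinv α * A * γ) j q := by
  rw [hα.pinv_mul_mul_apply hγ]
  exact div_nonneg (hA _ _) (hα.rowSum_pos _).le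

lemma sum_comp_toFun (hα : IsAbsMatrix α) (g : N → ℝ) :
    ∑ j, g (hα.toFun j) = ∑ i, (∑ j, α i j) * g i := by
  simp only [← hα.sum_mul_apply g, Finset.sum_mul]
  rw [Finset.sum_comm]
  exact Finset.sum_congr rfl fun i _ => Finset.sum_congr rfl fun j _ => mul_comm _ _

lemma jsd_comp_div_rowSum (hα : IsAbsMatrix α) (p q : N → ℝ) :
    JSD (fun j => p (hα.toFun j) / ∑ k, α (hα.toFun j) k)
      (fun j => q (hα.toFun j) / ∑ k, α (hα.toFun j) k) = JSD p q := by
  rw [jsd_eq_sqrt_sum_jsTerm, jsd_eq_sqrt_sum_jsTerm]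
  congr 1
  have hscale : ∀ i, jsTerm (p i / ∑ k, α i k) (q i / ∑ k, α i k)
      = (∑ k, α i k)⁻¹ * jsTerm (p i) (q i) := fun i => by
    simp only [div_eq_inv_mul]
    exact jsTerm_mul (inv_pos.2 (hα.rowSum_pos i)) _ _
  simp only [hscale, hα.sum_comp_toFun fun i => (∑ k, α i k)⁻¹ * jsTerm (p i) (q i)]
  exact Finset.sum_congr rfl fun i _ => mul_inv_cancel_left₀ (hα.rowSum_pos i).ne' _

lemma supJSD_pinv_mul_mul_le {P Q : Type*} [Fintype P] [Fintype Q] [Nonempty P] [Nonempty Q]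
    [DecidableEq N] {γ : Matrix P Q ℝ} (hα : IsAbsMatrix α) (hγ : IsAbsMatrix γ)
    (A B : Matrix N P ℝ) : supJSD (pinv α * A * γ) (pinv α * B * γ) ≤ supJSD A B :=
  Finset.sup'_le _ _ fun q _ => by
    simp only [hα.pinv_mul_mul_apply hγ]
    rw [hα.jsd_comp_div_rowSum (fun i => A i (hγ.toFun q)) (fun i => B i (hγ.toFun q))]
    exact Finset.le_sup' (fun p => JSD (fun i => A i p) (fun i => B i p)) (Finset.mem_univ _)

end IsAbsMatrix

theorem iil_triangle_general {X X' X'' Y Y' Y'' : Type*}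
    [Fintype X] [Nonempty X] [Fintype X'] [Nonempty X'] [Fintype X'']
    [Fintype Y] [Fintype Y'] [Fintype Y'']
    [DecidableEq Y'] [DecidableEq Y'']
    (μ : Matrix Y X ℝ) (μ' : Matrix Y' X' ℝ) (μ'' : Matrix Y'' X'' ℝ)
    (αX : Matrix X' X ℝ) (αY : Matrix Y' Y ℝ)
    (βX : Matrix X'' X' ℝ) (βY : Matrix Y'' Y' ℝ)
    (hμ : IsColStoch μ) (hμ' : IsColStoch μ') (hμ'' : IsColStoch μ'')
    (hαX : IsAbsMatrix αX) (hαY : IsAbsMatrix αY)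
    (hβX : IsAbsMatrix βX) (hβY : IsAbsMatrix βY) :
    supJSD μ (pinv αY * pinv βY * μ'' * βX * αX)
      ≤ supJSD μ (pinv αY * μ' * αX) + supJSD μ' (pinv βY * μ'' * βX) := by
  have hW := hβY.pinv_mul_mul_nonneg hβX hμ''.1
  calc supJSD μ (pinv αY * pinv βY * μ'' * βX * αX)
      = supJSD μ (pinv αY * (pinv βY * μ'' * βX) * αX) := by simp only [Matrix.mul_assoc]
    _ ≤ supJSD μ (pinv αY * μ' * αX)
          + supJSD (pinv αY * μ' * αX) (pinv αY * (pinv βY * μ'' * βX) * αX) :=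
        supJSD_triangle hμ.1 (hαY.pinv_mul_mul_nonneg hαX hμ'.1)
          (hαY.pinv_mul_mul_nonneg hαX hW)
    _ ≤ supJSD μ (pinv αY * μ' * αX) + supJSD μ' (pinv βY * μ'' * βX) :=
        add_le_add_right (hαY.supJSD_pinv_mul_mul_le hαX μ' _) _

theorem iil_triangle {X X' X'' Y Y' Y'' : Type*}
    [Fintype X] [Nonempty X] [Fintype X'] [Nonempty X'] [Fintype X''] [Nonempty X'']
    [Fintype Y] [Nonempty Y] [Fintype Y'] [Nonempty Y'] [Fintype Y''] [Nonempty Y'']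
    [DecidableEq Y'] [DecidableEq Y'']
    (μ : Matrix Y X ℝ) (μ' : Matrix Y' X' ℝ) (μ'' : Matrix Y'' X'' ℝ)
    (αX : Matrix X' X ℝ) (αY : Matrix Y' Y ℝ)
    (βX : Matrix X'' X' ℝ) (βY : Matrix Y'' Y' ℝ)
    (hμ : IsColStoch μ) (hμ' : IsColStoch μ') (hμ'' : IsColStoch μ'')
    (hαX : IsAbsMatrix αX) (hαY : IsAbsMatrix αY)
    (hβX : IsAbsMatrix βX) (hβY : IsAbsMatrix βY) :
    supJSD μ (pinv αY * pinv βY * μ'' * βX * αX)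
      ≤ supJSD μ (pinv αY * μ' * αX) + supJSD μ' (pinv βY * μ'' * βX) :=
  iil_triangle_general μ μ' μ'' αX αY βX βY hμ hμ' hμ'' hαX hαY hβX hβY
end
end

section
/- The interventional information loss dominates the interventional superresolution consistency error: E_IIL ≥ E_ISC, i.e., D(μ, α_Y⁺·μ'·α_X) ≥ D(μ·α_X⁺, α_Y⁺·μ'). -/
open Finset Matrix

noncomputable section

lemma log_sum_ineq {ι : Type*} (S : Finset ι) (a b : ι → ℝ)
    (ha : ∀ i ∈ S, 0 ≤ a i) (hb : ∀ i ∈ S, 0 ≤ b i)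
    (hab : ∀ i ∈ S, a i ≠ 0 → 0 < b i) :
    (∑ i ∈ S, a i) * Real.log ((∑ i ∈ S, a i) / (∑ i ∈ S, b i)) ≤
      ∑ i ∈ S, (if a i = 0 then 0 else a i * Real.log (a i / b i)) := by
  classical
  set A := ∑ i ∈ S, a i with hA
  set B := ∑ i ∈ S, b i with hB
  by_cases hA0 : A = 0
  · have hall : ∀ i ∈ S, a i = 0 := by
      intro i hi
      exact (Finset.sum_eq_zero_iff_of_nonneg ha).1 hA0 i hi
    rw [hA0]
    simp only [zero_mul]
    rw [Finset.sum_congr rfl (fun i hi => by rw [if_pos (hall i hi)])]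
    simp
  · have hApos : 0 < A := lt_of_le_of_ne (Finset.sum_nonneg ha) (Ne.symm hA0)
    obtain ⟨i₀, hi₀, hai₀⟩ : ∃ i ∈ S, a i ≠ 0 := by
      by_contra h
      push_neg at h
      exact hA0 (Finset.sum_eq_zero h)
    have hBpos : 0 < B := Finset.sum_pos' hb ⟨i₀, hi₀, hab i₀ hi₀ hai₀⟩
    set T := S.filter (fun i => a i ≠ 0) with hT
    have hRHS : (∑ i ∈ S, (if a i = 0 then 0 else a i * Real.log (a i / b i)))
        = ∑ i ∈ T, a i * Real.log (a i / b i) := by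
      rw [hT, Finset.sum_filter]
      exact Finset.sum_congr rfl fun i _ => by by_cases h : a i = 0 <;> simp [h]
    have hAT : ∑ i ∈ T, a i = A := by
      rw [hT]
      exact Finset.sum_filter_ne_zero S
    have hBT : ∑ i ∈ T, b i ≤ B := by
      apply Finset.sum_le_sum_of_subset_of_nonneg (Finset.filter_subset _ _)
      intro i hi _; exact hb i hi
    have key : ∀ i ∈ T, a i * Real.log (A / B) + a i - b i * (A / B)
        ≤ a i * Real.log (a i / b i) := by
      intro i hi
      rw [hT, Finset.mem_filter] at hi
      obtain ⟨hiS, hai⟩ := hi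
      have hapos : 0 < a i := lt_of_le_of_ne (ha i hiS) (Ne.symm hai)
      have hbpos : 0 < b i := hab i hiS hai
      have hx : 0 < (b i * A) / (a i * B) := by positivity
      have h1 := Real.log_le_sub_one_of_pos hx
      rw [Real.log_div (by positivity) (by positivity), Real.log_mul (ne_of_gt hbpos) hA0,
        Real.log_mul (ne_of_gt hapos) (ne_of_gt hBpos)] at h1
      have h2 : a i * ((b i * A) / (a i * B)) = b i * (A / B) := by
        field_simp
      rw [Real.log_div hA0 (ne_of_gt hBpos), Real.log_div (ne_of_gt hapos) (ne_of_gt hbpos)]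
      nlinarith [mul_le_mul_of_nonneg_left h1 (le_of_lt hapos)]
    have hsum := Finset.sum_le_sum key
    rw [Finset.sum_sub_distrib, Finset.sum_add_distrib, ← Finset.sum_mul, hAT,
      ← Finset.sum_mul] at hsum
    have hABnn : 0 ≤ A / B := le_of_lt (by positivity)
    have h3 : (∑ i ∈ T, b i) * (A / B) ≤ B * (A / B) :=
      mul_le_mul_of_nonneg_right hBT hABnn
    have h4 : B * (A / B) = A := by field_simp
    rw [hRHS]
    nlinarith [hsum]

lemma sum_log_le {ι : Type*} (S : Finset ι) (m : ι → ℝ) (c : ℝ)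
    (hm : ∀ i ∈ S, 0 < m i) (hc : 0 < c)
    (hsum : ∑ i ∈ S, m i = (S.card : ℝ) * c) :
    ∑ i ∈ S, Real.log (m i) ≤ (S.card : ℝ) * Real.log c := by
  have key : ∀ i ∈ S, Real.log (m i) - Real.log c ≤ m i / c - 1 := by
    intro i hi
    have := Real.log_le_sub_one_of_pos (div_pos (hm i hi) hc)
    rwa [Real.log_div (ne_of_gt (hm i hi)) (ne_of_gt hc)] at this
  have hs := Finset.sum_le_sum key
  rw [Finset.sum_sub_distrib, Finset.sum_sub_distrib, Finset.sum_const, Finset.sum_const,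
    ← Finset.sum_div, hsum] at hs
  have : (S.card : ℝ) * c / c = (S.card : ℝ) := by field_simp
  rw [this] at hs
  simp only [nsmul_eq_mul, mul_one] at hs
  linarith

lemma jsd_avg_le {ι Z : Type*} [Fintype Z] (S : Finset ι) (hS : S.Nonempty)
    (p : ι → Z → ℝ) (q : Z → ℝ)
    (hp : ∀ i ∈ S, ∀ z, 0 ≤ p i z) (hq : ∀ z, 0 ≤ q z) :
    JSD (fun z => (∑ i ∈ S, p i z) / (S.card : ℝ)) q ≤ S.sup' hS fun i => JSD (p i) q := by
  classical
  set n : ℝ := (S.card : ℝ) with hn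
  have hnpos : 0 < n := by
    rw [hn]
    exact_mod_cast Finset.card_pos.2 hS
  set A : Z → ℝ := fun z => ∑ i ∈ S, p i z with hA
  set B : Z → ℝ := fun z => ∑ i ∈ S, (p i z + q z) / 2 with hB
  have hBz : ∀ z, B z = (A z + n * q z) / 2 := by
    intro z
    rw [hB, hA]
    simp only []
    rw [← Finset.sum_div, Finset.sum_add_distrib, Finset.sum_const, nsmul_eq_mul]
  have hmbar : ∀ z, (A z / n + q z) / 2 = B z / n := by
    intro z
    rw [hBz z]
    field_simp
  set pbar : Z → ℝ := fun z => A z / n with hpbar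
  -- Claim 1
  have claim1 : KL pbar (fun z => (pbar z + q z) / 2)
      ≤ (1 / n) * ∑ i ∈ S, KL (p i) (fun z => (p i z + q z) / 2) := by
    unfold KL
    rw [Finset.sum_comm, Finset.mul_sum]
    apply Finset.sum_le_sum
    intro z _
    beta_reduce
    have hls := log_sum_ineq S (fun i => p i z) (fun i => (p i z + q z) / 2)
      (fun i hi => hp i hi z)
      (fun i hi => by have h1 := hp i hi z; have h2 := hq z; positivity)
      (fun i hi hne => by
        have h1 := lt_of_le_of_ne (hp i hi z) (Ne.symm hne)
        have h2 := hq z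
        positivity)
    have hls' : A z * Real.log (A z / B z)
        ≤ ∑ i ∈ S, (if p i z = 0 then 0 else p i z * Real.log (p i z / ((p i z + q z) / 2))) := hls
    have hLHS : (if pbar z = 0 then 0 else pbar z * Real.log (pbar z / ((pbar z + q z) / 2)))
        = (1 / n) * (A z * Real.log (A z / B z)) := by
      by_cases hz : A z = 0
      · rw [if_pos (by rw [hpbar]; simp [hz])]
        rw [hz]
        simp
      · rw [if_neg (by rw [hpbar]; exact div_ne_zero hz (ne_of_gt hnpos))]
        have h1 : pbar z / ((pbar z + q z) / 2) = A z / B z := by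
          rw [hpbar]
          simp only []
          rw [hmbar z, div_div_div_comm, div_self (ne_of_gt hnpos), div_one]
        rw [h1, hpbar]
        ring
    rw [hLHS]
    exact mul_le_mul_of_nonneg_left hls' (by positivity)
  -- Claim 2
  have claim2 : KL q (fun z => (pbar z + q z) / 2)
      ≤ (1 / n) * ∑ i ∈ S, KL q (fun z => (p i z + q z) / 2) := by
    unfold KL
    rw [Finset.sum_comm, Finset.mul_sum]
    apply Finset.sum_le_sum
    intro z _
    beta_reduce
    by_cases hqz : q z = 0
    · rw [if_pos hqz]
      rw [Finset.sum_congr rfl (fun i _ => if_pos hqz)]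
      simp
    · have hqpos : 0 < q z := lt_of_le_of_ne (hq z) (Ne.symm hqz)
      have hmpos : ∀ i ∈ S, 0 < (p i z + q z) / 2 := fun i hi => by
        have := hp i hi z; positivity
      have hBpos : 0 < B z := by
        rw [hB]
        exact Finset.sum_pos hmpos hS
      have hcpos : 0 < B z / n := div_pos hBpos hnpos
      rw [if_neg hqz, Finset.sum_congr rfl (fun i _ => if_neg hqz)]
      have hnB : (n : ℝ) * (B z / n) = B z := by field_simp
      have hlog := sum_log_le S (fun i => (p i z + q z) / 2) (B z / n) hmpos hcpos
        (by rw [← hn, hnB])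
      have hmb : (pbar z + q z) / 2 = B z / n := by rw [hpbar]; exact hmbar z
      rw [hmb, Real.log_div hqz (ne_of_gt hcpos)]
      have hexp : ∀ i ∈ S, q z * Real.log (q z / ((p i z + q z) / 2))
          = q z * Real.log (q z) - q z * Real.log ((p i z + q z) / 2) := by
        intro i hi
        rw [Real.log_div hqz (ne_of_gt (hmpos i hi))]
        ring
      rw [Finset.sum_congr rfl hexp, Finset.sum_sub_distrib, Finset.sum_const,
        ← Finset.mul_sum, nsmul_eq_mul, ← hn]
      rw [one_div, inv_mul_eq_div, le_div_iff₀ hnpos]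
      nlinarith [mul_le_mul_of_nonneg_left hlog hqpos.le]
  -- assemble
  set F : ι → ℝ := fun i => 1 / 2 * KL (p i) (fun z => (p i z + q z) / 2)
      + 1 / 2 * KL q (fun z => (p i z + q z) / 2) with hF
  have havg : 1 / 2 * KL pbar (fun z => (pbar z + q z) / 2)
      + 1 / 2 * KL q (fun z => (pbar z + q z) / 2) ≤ (1 / n) * ∑ i ∈ S, F i := by
    rw [hF]
    simp only []
    rw [Finset.sum_add_distrib, ← Finset.mul_sum, ← Finset.mul_sum, mul_add]
    rw [← mul_assoc, ← mul_assoc, mul_comm (1/n) (1/2:ℝ), mul_assoc, mul_assoc]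
    have := claim1; have := claim2
    nlinarith [claim1, claim2]
  obtain ⟨i0, hi0S, hi0⟩ := Finset.exists_mem_eq_sup' hS F
  have hFsum : (1 / n) * ∑ i ∈ S, F i ≤ F i0 := by
    have h1 : ∑ i ∈ S, F i ≤ ∑ _i ∈ S, F i0 :=
      Finset.sum_le_sum fun i hi => hi0 ▸ Finset.le_sup' F hi
    rw [Finset.sum_const, nsmul_eq_mul, ← hn] at h1
    rw [one_div, inv_mul_eq_div, div_le_iff₀ hnpos]
    linarith
  have hsq : JSD pbar q ≤ JSD (p i0) q := by
    unfold JSD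
    exact Real.sqrt_le_sqrt (by exact le_trans havg hFsum)
  exact le_trans hsq (Finset.le_sup' (fun i => JSD (p i) q) hi0S)


section Aux
variable {N M : Type*} [Fintype N] [Fintype M] [DecidableEq N]

lemma IsAbsMatrix.entry_nonneg {α : Matrix N M ℝ} (hα : IsAbsMatrix α) (j : N) (i : M) :
    0 ≤ α j i := by rcases hα.1 j i with h | h <;> simp [h]

lemma IsAbsMatrix.rowsum_pos {α : Matrix N M ℝ} (hα : IsAbsMatrix α) (j : N) :
    0 < ∑ i, α j i := by
  obtain ⟨i, hi⟩ := hα.2.2 j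
  have h1 : (1 : ℝ) ≤ ∑ i', α j i' := by
    calc (1 : ℝ) = α j i := hi.symm
    _ ≤ ∑ i', α j i' :=
      Finset.single_le_sum (fun i' _ => hα.entry_nonneg j i') (Finset.mem_univ i)
  linarith

lemma IsAbsMatrix.mul_transpose_s13 {α : Matrix N M ℝ} (hα : IsAbsMatrix α) :
    α * αᵀ = Matrix.diagonal (fun j => ∑ i, α j i) := by
  ext j k
  rw [Matrix.mul_apply, Matrix.diagonal_apply]
  by_cases hjk : j = k
  · subst hjk
    rw [if_pos rfl]
    refine Finset.sum_congr rfl fun i _ => ?_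
    rw [Matrix.transpose_apply]
    rcases hα.1 j i with h | h <;> simp [h]
  · rw [if_neg hjk]
    refine Finset.sum_eq_zero fun i _ => ?_
    rw [Matrix.transpose_apply]
    rcases hα.1 j i with h | h
    · rw [h, zero_mul]
    · rcases hα.1 k i with h' | h'
      · rw [h', mul_zero]
      · obtain ⟨w, _, huniq⟩ := hα.2.1 i
        exact absurd ((huniq j h).trans (huniq k h').symm) hjk

lemma pinv_apply {α : Matrix N M ℝ} (hα : IsAbsMatrix α) (i : M) (j : N) :
    pinv α i j = α j i / (∑ i', α j i') := by
  unfold pinv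
  have hne : ∀ j, (∑ i', α j i') ≠ 0 := fun j => ne_of_gt (hα.rowsum_pos j)
  set u : (N → ℝ)ˣ := ⟨fun j => ∑ i', α j i', fun j => (∑ i', α j i')⁻¹,
    funext fun j => mul_inv_cancel₀ (hne j), funext fun j => inv_mul_cancel₀ (hne j)⟩ with hu
  have h2 : Ring.inverse (fun j => ∑ i' : M, α j i') = ((u⁻¹ : (N → ℝ)ˣ) : N → ℝ) :=
    Ring.inverse_unit u
  rw [hα.mul_transpose_s13, Matrix.inv_diagonal, h2, Matrix.mul_diagonal, Matrix.transpose_apply]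
  show α j i * (∑ i', α j i')⁻¹ = _
  rw [div_eq_mul_inv]

end Aux

theorem iil_ge_isc {X X' Y Y' : Type*}
    [Fintype X] [Nonempty X] [Fintype X'] [Nonempty X']
    [Fintype Y] [Nonempty Y] [Fintype Y'] [Nonempty Y']
    [DecidableEq X'] [DecidableEq Y']
    (μ : Matrix Y X ℝ) (μ' : Matrix Y' X' ℝ)
    (αX : Matrix X' X ℝ) (αY : Matrix Y' Y ℝ)
    (hμ : IsColStoch μ) (hμ' : IsColStoch μ')
    (hαX : IsAbsMatrix αX) (hαY : IsAbsMatrix αY) :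
    supJSD μ (pinv αY * μ' * αX) ≥ supJSD (μ * pinv αX) (pinv αY * μ') := by
  classical
  have hνnn : ∀ y x', 0 ≤ (pinv αY * μ') y x' := by
    intro y x'
    rw [Matrix.mul_apply]
    refine Finset.sum_nonneg fun y' _ => ?_
    rw [pinv_apply hαY]
    have h1 := hαY.entry_nonneg y' y
    have h2 := hαY.rowsum_pos y'
    have h3 := hμ'.1 y' x'
    positivity
  rw [ge_iff_le]
  unfold supJSD
  apply Finset.sup'_le
  intro x' _
  set T : Finset X := Finset.univ.filter (fun x => αX x' x = 1) with hTdef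
  have hTne : T.Nonempty := by
    obtain ⟨x, hx⟩ := hαX.2.2 x'
    exact ⟨x, by simp [hTdef, hx]⟩
  have hcard : ((T.card : ℝ)) = ∑ x, αX x' x := by
    rw [hTdef, Finset.card_filter]
    push_cast
    refine Finset.sum_congr rfl fun x _ => ?_
    rcases hαX.1 x' x with h | h <;> simp [h]
  have hcol : (fun y => (μ * pinv αX) y x') = fun y => (∑ x ∈ T, μ y x) / (T.card : ℝ) := by
    funext y
    rw [Matrix.mul_apply]
    have h1 : ∀ x, μ y x * pinv αX x x' = μ y x * αX x' x / (∑ x'', αX x' x'') := by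
      intro x
      rw [pinv_apply hαX]
      ring
    rw [Finset.sum_congr rfl (fun x _ => h1 x), ← Finset.sum_div, hcard]
    congr 1
    rw [hTdef, Finset.sum_filter]
    refine (Finset.sum_congr rfl fun x _ => ?_).symm
    rcases hαX.1 x' x with h | h <;> simp [h]
  rw [hcol]
  have key := jsd_avg_le T hTne (fun x y => μ y x) (fun y => (pinv αY * μ') y x')
    (fun x _ y => hμ.1 y x) (fun y => hνnn y x')
  refine le_trans key (Finset.sup'_le _ _ fun x₀ hx₀ => ?_)
  have hx₀1 : αX x' x₀ = 1 := by
    rw [hTdef] at hx₀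
    exact (Finset.mem_filter.1 hx₀).2
  have hcol2 : (fun y => (pinv αY * μ') y x') = fun y => (pinv αY * μ' * αX) y x₀ := by
    funext y
    symm
    rw [Matrix.mul_apply, Finset.sum_eq_single x']
    · rw [hx₀1, mul_one]
    · intro b _ hb
      rcases hαX.1 b x₀ with h | h
      · rw [h, mul_zero]
      · obtain ⟨w, _, huniq⟩ := hαX.2.1 x₀
        exact absurd ((huniq b h).trans (huniq x' hx₀1).symm) hb
    · intro h
      exact absurd (Finset.mem_univ x') h
  rw [hcol2]
  exact Finset.le_sup' (fun x => JSD (fun y => μ y x) (fun y => (pinv αY * μ' * αX) y x))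
    (Finset.mem_univ x₀)
end
end
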